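/- arXiv:2507.06888 — 4 statements merged into one kernel-verified Lean document; each statement's English description precedes it below -/
import Mathlib

section
/- Let x_i = e_i and x_j = a·e_i + e_j with e_i, e_j independent, mean-zero, finite third moments. Define τ_{ij} = C_3(x_i)·C_{1,2}(x_i,x_j) − C_{2,1}(x_i,x_j)·C_{1,2}(x_j,x_i). Then τ_{ij} = 0. -/
/-!
Writing `A = E[e_i² e_j]` and `B = E[e_i e_j²]`, expanding the moments of `x_j = a e_i + e_j`
gives `τ_{ij} = C₃(e_i) B - A²` for every `a`, and independence together with `E[e_i] = E[e_j] = 0`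
makes `A = B = 0`. The factorisation of mixed moments needs `e_i, e_j` to be a.e.-measurable;
this follows from the integrability of their cubes, since an odd power is a continuous
injection of `ℝ`, hence a measurable embedding.
-/

open MeasureTheory ProbabilityTheory

section

variable {Ω : Type*} [MeasurableSpace Ω] {μ : Measure Ω} {X Y : Ω → ℝ}

lemma measurableEmbedding_pow_of_odd {n : ℕ} (hn : Odd n) :
    MeasurableEmbedding (fun x : ℝ => x ^ n) :=
  (continuous_pow n).measurableEmbedding hn.pow_injective

lemma MeasureTheory.AEStronglyMeasurable.of_pow_of_odd {n : ℕ} (hn : Odd n)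
    (h : AEStronglyMeasurable (X ^ n) μ) : AEStronglyMeasurable X μ :=
  ((measurableEmbedding_pow_of_odd hn).aemeasurable_comp_iff.mp h.aemeasurable).aestronglyMeasurable

lemma ProbabilityTheory.IndepFun.integral_pow_mul_pow (hXY : IndepFun X Y μ)
    (hX : AEStronglyMeasurable X μ) (hY : AEStronglyMeasurable Y μ) (k l : ℕ) :
    μ[X ^ k * Y ^ l] = μ[X ^ k] * μ[Y ^ l] :=
  (hXY.comp (measurable_id.pow_const k) (measurable_id.pow_const l)).integral_mul_eq_mul_integral
    (hX.pow k) (hY.pow l)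

lemma integral_sq_mul_smul_add (a : ℝ) (hX3 : Integrable (X ^ 3) μ)
    (hXXY : Integrable (X ^ 2 * Y) μ) :
    μ[X ^ 2 * (a • X + Y)] = a * μ[X ^ 3] + μ[X ^ 2 * Y] := by
  have hexp : X ^ 2 * (a • X + Y) = a • X ^ 3 + X ^ 2 * Y := by
    ext ω
    simp only [Pi.mul_apply, Pi.pow_apply, Pi.add_apply, Pi.smul_apply, smul_eq_mul]
    ring
  rw [hexp, integral_add' (hX3.smul a) hXXY]
  simp only [Pi.smul_apply, smul_eq_mul, integral_const_mul]

lemma integral_mul_smul_add_sq (a : ℝ) (hX3 : Integrable (X ^ 3) μ)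
    (hXXY : Integrable (X ^ 2 * Y) μ) (hXYY : Integrable (X * Y ^ 2) μ) :
    μ[X * (a • X + Y) ^ 2] = a ^ 2 * μ[X ^ 3] + 2 * a * μ[X ^ 2 * Y] + μ[X * Y ^ 2] := by
  have hexp : X * (a • X + Y) ^ 2 = a ^ 2 • X ^ 3 + (2 * a) • (X ^ 2 * Y) + X * Y ^ 2 := by
    ext ω
    simp only [Pi.mul_apply, Pi.pow_apply, Pi.add_apply, Pi.smul_apply, smul_eq_mul]
    ring
  rw [hexp, integral_add' ((hX3.smul _).add (hXXY.smul _)) hXYY,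
    integral_add' (hX3.smul _) (hXXY.smul _)]
  simp only [Pi.smul_apply, smul_eq_mul, integral_const_mul]

end

/-- For `x_i = e_i`, `x_j = a e_i + e_j` with independent mean-zero noises,
`τ_{ij} = C₃(x_i) C_{1,2}(x_i,x_j) − C_{2,1}(x_i,x_j) C_{1,2}(x_j,x_i) = 0`. -/
theorem tau_ij_eq_zero {Ω : Type*} [MeasureSpace Ω] (μ : Measure Ω)
    [IsProbabilityMeasure μ] (eI eJ : Ω → ℝ) (a : ℝ)
    (hindep : IndepFun eI eJ μ)
    (hmi : μ[eI] = 0) (hmj : μ[eJ] = 0)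
    (hi3 : Integrable (eI ^ 3) μ) (hj3 : Integrable (eJ ^ 3) μ)
    (hij : Integrable (eI ^ 2 * eJ) μ) (hji : Integrable (eI * eJ ^ 2) μ)
    (xI xJ : Ω → ℝ) (hxI : xI = eI)
    (hxJ : ∀ ω, xJ ω = a * eI ω + eJ ω) :
    μ[xI ^ 3] * μ[xI * xJ ^ 2] - μ[xI ^ 2 * xJ] * μ[xJ * xI ^ 2] = 0 := by
  have hxJ' : xJ = a • eI + eJ := funext hxJ
  subst xI xJ
  have hI := hi3.aestronglyMeasurable.of_pow_of_odd (by decide)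
  have hJ := hj3.aestronglyMeasurable.of_pow_of_odd (by decide)
  have hA : μ[eI ^ 2 * eJ] = 0 := by
    simpa [hmj] using hindep.integral_pow_mul_pow hI hJ 2 1
  have hB : μ[eI * eJ ^ 2] = 0 := by
    simpa [hmi] using hindep.integral_pow_mul_pow hI hJ 1 2
  rw [mul_comm _ (eI ^ 2), integral_mul_smul_add_sq a hi3 hij hji,
    integral_sq_mul_smul_add a hi3 hij, hA, hB]
  ring
end

section
/- Let x_i = e_i and x_j = a·e_i + e_j with e_i, e_j independent, mean-zero, finite third moments. Define τ_{ji} = C_3(x_j)·C_{1,2}(x_j,x_i) − C_{2,1}(x_j,x_i)·C_{1,2}(x_i,x_j). Then τ_{ji} = a·C_3(e_i)·C_3(e_j). In particular if a ≠ 0, C_3(e_i) ≠ 0, and C_3(e_j) ≠ 0, then τ_{ji} ≠ 0. -/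
open MeasureTheory ProbabilityTheory

/-!
Every moment entering `τ_{ji}` is the integral of a cubic form in `(e_i, e_j)`. By independence
the mixed moments `E[e_i² e_j]` and `E[e_j² e_i]` factor and vanish because the means are zero,
so `C₃(x_j) = a³ C₃(e_i) + C₃(e_j)`, `C_{1,2}(x_j, x_i) = a C₃(e_i)` and
`C_{2,1}(x_j, x_i) = C_{1,2}(x_i, x_j) = a² C₃(e_i)`. Hence
`τ_{ji} = (a³ C₃(e_i) + C₃(e_j)) a C₃(e_i) - a⁴ C₃(e_i)² = a C₃(e_i) C₃(e_j)`.
-/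

theorem Odd.isEmbedding_pow {n : ℕ} (hn : Odd n) : Topology.IsEmbedding fun x : ℝ => x ^ n :=
  hn.strictMono_pow.isEmbedding_of_ordConnected
    (isPreconnected_range (continuous_pow n)).ordConnected

section
variable {α : Type*} [MeasurableSpace α] {μ : Measure α} {f : α → ℝ}

theorem aestronglyMeasurable_of_pow_of_odd {n : ℕ} (hn : Odd n)
    (h : AEStronglyMeasurable (f ^ n) μ) : AEStronglyMeasurable f μ :=
  hn.isEmbedding_pow.aestronglyMeasurable_comp_iff.1 h

theorem integrable_pow_of_le [IsFiniteMeasure μ] (hf : AEStronglyMeasurable f μ) {m n : ℕ}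
    (hmn : m ≤ n) (h : Integrable (f ^ n) μ) : Integrable (f ^ m) μ := by
  have hn : Integrable (fun x => ‖f x‖ ^ n) μ := by
    simpa only [Pi.pow_apply, norm_pow] using h.norm
  refine (integrable_norm_iff (hf.pow m)).1 ?_
  simpa only [Pi.pow_apply, norm_pow] using integrable_norm_pow_of_le hf hmn hn

end

namespace ProbabilityTheory.IndepFun
variable {Ω : Type*} [MeasurableSpace Ω] {μ : Measure Ω} {X Y : Ω → ℝ}

theorem integral_pow_mul_eq_zero (hXY : IndepFun X Y μ)
    (hX : AEStronglyMeasurable X μ) (hY : AEStronglyMeasurable Y μ) (hY0 : μ[Y] = 0) (k : ℕ) :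
    μ[X ^ k * Y] = 0 := by
  have hXkY : IndepFun (X ^ k) Y μ := hXY.comp (measurable_id.pow_const k) measurable_id
  rw [hXkY.integral_mul_eq_mul_integral (hX.pow k) hY, hY0, mul_zero]

theorem integrable_pow_mul [IsFiniteMeasure μ] (hXY : IndepFun X Y μ)
    (hX : AEStronglyMeasurable X μ) (hY : AEStronglyMeasurable Y μ) {k n : ℕ}
    (hk : k ≤ n) (hn : 1 ≤ n) (hXn : Integrable (X ^ n) μ) (hYn : Integrable (Y ^ n) μ) :
    Integrable (X ^ k * Y) μ := by
  have hXkY : IndepFun (X ^ k) Y μ := hXY.comp (measurable_id.pow_const k) measurable_id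
  exact hXkY.integrable_mul (integrable_pow_of_le hX hk hXn)
    (by simpa only [pow_one] using integrable_pow_of_le hY hn hYn)

theorem integral_cubic_form [IsFiniteMeasure μ] (hXY : IndepFun X Y μ)
    (hX3 : Integrable (X ^ 3) μ) (hY3 : Integrable (Y ^ 3) μ) (hX0 : μ[X] = 0) (hY0 : μ[Y] = 0)
    (c₀ c₁ c₂ c₃ : ℝ) :
    ∫ ω, c₀ * (X ^ 3) ω + c₁ * (X ^ 2 * Y) ω + c₂ * (Y ^ 2 * X) ω + c₃ * (Y ^ 3) ω ∂μ
      = c₀ * μ[X ^ 3] + c₃ * μ[Y ^ 3] := by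
  have hX := aestronglyMeasurable_of_pow_of_odd (by decide) hX3.1
  have hY := aestronglyMeasurable_of_pow_of_odd (by decide) hY3.1
  have hXXY := hXY.integrable_pow_mul hX hY (by norm_num : 2 ≤ 3) (by norm_num) hX3 hY3
  have hYYX := hXY.symm.integrable_pow_mul hY hX (by norm_num : 2 ≤ 3) (by norm_num) hY3 hX3
  have eXXY := hXY.integral_pow_mul_eq_zero hX hY hY0 2
  have eYYX := hXY.symm.integral_pow_mul_eq_zero hY hX hX0 2
  have i₀ := hX3.const_mul c₀
  have i₁ := hXXY.const_mul c₁
  have i₂ := hYYX.const_mul c₂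
  have i₃ := hY3.const_mul c₃
  rw [integral_add (by fun_prop) i₃, integral_add (by fun_prop) i₂, integral_add i₀ i₁,
    integral_const_mul, integral_const_mul, integral_const_mul, integral_const_mul, eXXY, eYYX]
  ring

end ProbabilityTheory.IndepFun

theorem tau_ji_eq_general {Ω : Type*} [MeasureSpace Ω] (μ : Measure Ω)
    [IsProbabilityMeasure μ] (eI eJ : Ω → ℝ) (a : ℝ)
    (hindep : IndepFun eI eJ μ)
    (hmi : μ[eI] = 0) (hmj : μ[eJ] = 0)
    (hi3 : Integrable (eI ^ 3) μ) (hj3 : Integrable (eJ ^ 3) μ)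
    (xI xJ : Ω → ℝ) (hxI : xI = eI)
    (hxJ : ∀ ω, xJ ω = a * eI ω + eJ ω) :
    μ[xJ ^ 3] * μ[xJ * xI ^ 2] - μ[xJ ^ 2 * xI] * μ[xI * xJ ^ 2]
        = a * μ[eI ^ 3] * μ[eJ ^ 3] ∧
      (a ≠ 0 → μ[eI ^ 3] ≠ 0 → μ[eJ ^ 3] ≠ 0 →
        μ[xJ ^ 3] * μ[xJ * xI ^ 2] - μ[xJ ^ 2 * xI] * μ[xI * xJ ^ 2] ≠ 0) := by
  subst xI
  have moment (Z : Ω → ℝ) (c₀ c₁ c₂ c₃ : ℝ)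
      (hZ : ∀ ω, Z ω = c₀ * (eI ^ 3) ω + c₁ * (eI ^ 2 * eJ) ω + c₂ * (eJ ^ 2 * eI) ω
        + c₃ * (eJ ^ 3) ω) :
      μ[Z] = c₀ * μ[eI ^ 3] + c₃ * μ[eJ ^ 3] :=
    (integral_congr_ae (ae_of_all _ hZ)).trans
      (hindep.integral_cubic_form hi3 hj3 hmi hmj c₀ c₁ c₂ c₃)
  have hA := moment (xJ ^ 3) (a ^ 3) (3 * a ^ 2) (3 * a) 1 fun ω => by
    simp only [Pi.pow_apply, Pi.mul_apply, hxJ]; ring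
  have hB := moment (xJ * eI ^ 2) a 1 0 0 fun ω => by
    simp only [Pi.pow_apply, Pi.mul_apply, hxJ]; ring
  have hC := moment (xJ ^ 2 * eI) (a ^ 2) (2 * a) 1 0 fun ω => by
    simp only [Pi.pow_apply, Pi.mul_apply, hxJ]; ring
  have hD := moment (eI * xJ ^ 2) (a ^ 2) (2 * a) 1 0 fun ω => by
    simp only [Pi.pow_apply, Pi.mul_apply, hxJ]; ring
  have hτ : μ[xJ ^ 3] * μ[xJ * eI ^ 2] - μ[xJ ^ 2 * eI] * μ[eI * xJ ^ 2]
      = a * μ[eI ^ 3] * μ[eJ ^ 3] := by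
    rw [hA, hB, hC, hD]; ring
  exact ⟨hτ, fun ha hi hj => hτ ▸ mul_ne_zero (mul_ne_zero ha hi) hj⟩

/-- For `x_i = e_i`, `x_j = a e_i + e_j` with independent mean-zero noises,
`τ_{ji} = C₃(x_j) C_{1,2}(x_j,x_i) − C_{2,1}(x_j,x_i) C_{1,2}(x_i,x_j)`
equals `a C₃(e_i) C₃(e_j)`; in particular it is nonzero when `a`, `C₃(e_i)`,
`C₃(e_j)` are nonzero. -/
theorem tau_ji_eq {Ω : Type*} [MeasureSpace Ω] (μ : Measure Ω)
    [IsProbabilityMeasure μ] (eI eJ : Ω → ℝ) (a : ℝ)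
    (hindep : IndepFun eI eJ μ)
    (hmi : μ[eI] = 0) (hmj : μ[eJ] = 0)
    (hi3 : Integrable (eI ^ 3) μ) (hj3 : Integrable (eJ ^ 3) μ)
    (hij : Integrable (eI ^ 2 * eJ) μ) (hji : Integrable (eI * eJ ^ 2) μ)
    (xI xJ : Ω → ℝ) (hxI : xI = eI)
    (hxJ : ∀ ω, xJ ω = a * eI ω + eJ ω) :
    μ[xJ ^ 3] * μ[xJ * xI ^ 2] - μ[xJ ^ 2 * xI] * μ[xI * xJ ^ 2]
        = a * μ[eI ^ 3] * μ[eJ ^ 3] ∧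
      (a ≠ 0 → μ[eI ^ 3] ≠ 0 → μ[eJ ^ 3] ≠ 0 →
        μ[xJ ^ 3] * μ[xJ * xI ^ 2] - μ[xJ ^ 2 * xI] * μ[xI * xJ ^ 2] ≠ 0) :=
  tau_ji_eq_general μ eI eJ a hindep hmi hmj hi3 hj3 xI xJ hxI hxJ
end

section
/- Chain structure cumulant computation: let x_i = e_i, x_j = b·x_i + e_j, x_k = c·x_j + e_k with e_i, e_j, e_k jointly independent, mean-zero, finite third moments. Then C_{2,1}(x_j, x_k) = c·(b^3·C_3(e_i) + C_3(e_j)) and C_{1,2}(x_j, x_k) = c^2·(b^3·C_3(e_i) + C_3(e_j)). -/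
/-!
Write `x_j = b e_i + e_j` and `x_k = c x_j + e_k`. Each moment in the statement is the expectation
of a product of three linear forms in a pair of independent mean-zero variables with finite third
moments: `(e_i, e_j)` for `E[x_j³]`, and `(x_j, e_k)` for the two cumulants. Expanding, the mixed
terms `E[X²Y] = E[X²] E[Y]` and `E[XY²] = E[X] E[Y²]` vanish and only the pure cubes survive.
-/

open MeasureTheory ProbabilityTheory
open scoped ENNReal

section

variable {Ω : Type*} {mΩ : MeasurableSpace Ω} {μ : Measure Ω}

namespace MeasureTheory

lemma MemLp.integrable_mul_mul {f g h : Ω → ℝ} (hf : MemLp f 3 μ) (hg : MemLp g 3 μ)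
    (hh : MemLp h 3 μ) : Integrable (f * g * h) μ := by
  have := ENNReal.HolderTriple.of 3 3
  have : ENNReal.HolderTriple ((3 : ℝ≥0∞)⁻¹ + 3⁻¹)⁻¹ 3 1 := ⟨by
    rw [inv_one, inv_inv, ← ENNReal.mul_inv_cancel (a := 3) (by norm_num) (by norm_num)]
    ring⟩
  have hfg : MemLp (f * g) ((3 : ℝ≥0∞)⁻¹ + 3⁻¹)⁻¹ μ := hg.mul hf
  exact memLp_one_iff_integrable.1 (hh.mul hfg)

lemma memLp_three_of_integrable_mul_mul_self {f : Ω → ℝ} (hf : Integrable (f * f * f) μ) :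
    MemLp f 3 μ := by
  have hcube : MeasurableEmbedding (fun x : ℝ => x ^ 3) :=
    (continuous_pow 3).measurableEmbedding (Odd.strictMono_pow (by decide)).injective
  have hmeas : AEMeasurable f μ := hcube.aemeasurable_comp_iff.1 <|
    hf.aemeasurable.congr (ae_of_all _ fun ω => by simp [pow_three, mul_assoc])
  refine (integrable_norm_rpow_iff hmeas.aestronglyMeasurable (by norm_num) (by norm_num)).1 ?_
  refine hf.norm.congr (ae_of_all _ fun ω => ?_)
  simp [pow_three, mul_assoc]

end MeasureTheory

namespace ProbabilityTheory

variable {X Y : Ω → ℝ}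

lemma IndepFun.integral_mul_mul_of_integral_eq_zero (hXY : IndepFun X Y μ) (hX : MemLp X 3 μ)
    (hY : MemLp Y 3 μ) (hX0 : μ[X] = 0) (hY0 : μ[Y] = 0) (a b c d e f : ℝ) :
    ∫ ω, (a * X ω + b * Y ω) * (c * X ω + d * Y ω) * (e * X ω + f * Y ω) ∂μ
      = a * c * e * ∫ ω, X ω ^ 3 ∂μ + b * d * f * ∫ ω, Y ω ^ 3 ∂μ := by
  have hXXY : ∫ ω, X ω * X ω * Y ω ∂μ = 0 := by
    have h : IndepFun (X * X) Y μ := hXY.comp (measurable_id.mul measurable_id) measurable_id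
    exact (h.integral_fun_mul_eq_mul_integral (hX.1.mul hX.1) hY.1).trans (by rw [hY0, mul_zero])
  have hXYY : ∫ ω, X ω * Y ω * Y ω ∂μ = 0 := by
    have h : IndepFun X (Y * Y) μ := hXY.comp measurable_id (measurable_id.mul measurable_id)
    have hprod := h.integral_fun_mul_eq_mul_integral hX.1 (hY.1.mul hY.1)
    simp only [Pi.mul_apply, ← mul_assoc] at hprod
    rw [hprod, hX0, zero_mul]
  have hX3 : Integrable (fun ω => X ω ^ 3) μ :=
    (hX.integrable_mul_mul hX hX).congr (.of_forall fun ω => by simp only [Pi.mul_apply]; ring)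
  have hY3 : Integrable (fun ω => Y ω ^ 3) μ :=
    (hY.integrable_mul_mul hY hY).congr (.of_forall fun ω => by simp only [Pi.mul_apply]; ring)
  have hXXY' : Integrable (fun ω => X ω * X ω * Y ω) μ := hX.integrable_mul_mul hX hY
  have hXYY' : Integrable (fun ω => X ω * Y ω * Y ω) μ := hX.integrable_mul_mul hY hY
  calc ∫ ω, (a * X ω + b * Y ω) * (c * X ω + d * Y ω) * (e * X ω + f * Y ω) ∂μ
      = ∫ ω, a * c * e * X ω ^ 3 + (a * c * f + a * d * e + b * c * e) * (X ω * X ω * Y ω)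
          + (a * d * f + b * c * f + b * d * e) * (X ω * Y ω * Y ω) + b * d * f * Y ω ^ 3 ∂μ := by
        congr 1; ext ω; ring
    _ = a * c * e * ∫ ω, X ω ^ 3 ∂μ + b * d * f * ∫ ω, Y ω ^ 3 ∂μ := by
        rw [integral_add, integral_add, integral_add] <;> try fun_prop
        simp only [integral_const_mul, hXXY, hXYY]
        ring

lemma IndepFun.integral_mul_add_pow_three (hXY : IndepFun X Y μ) (hX : MemLp X 3 μ)
    (hY : MemLp Y 3 μ) (hX0 : μ[X] = 0) (hY0 : μ[Y] = 0) (b : ℝ) :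
    ∫ ω, (b * X ω + Y ω) ^ 3 ∂μ = b ^ 3 * ∫ ω, X ω ^ 3 ∂μ + ∫ ω, Y ω ^ 3 ∂μ := by
  calc ∫ ω, (b * X ω + Y ω) ^ 3 ∂μ
      = ∫ ω, (b * X ω + 1 * Y ω) * (b * X ω + 1 * Y ω) * (b * X ω + 1 * Y ω) ∂μ := by
        congr 1; ext ω; ring
    _ = _ := by rw [hXY.integral_mul_mul_of_integral_eq_zero hX hY hX0 hY0]; ring

lemma IndepFun.integral_sq_mul_mul_add (hXY : IndepFun X Y μ) (hX : MemLp X 3 μ)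
    (hY : MemLp Y 3 μ) (hX0 : μ[X] = 0) (hY0 : μ[Y] = 0) (c : ℝ) :
    ∫ ω, X ω ^ 2 * (c * X ω + Y ω) ∂μ = c * ∫ ω, X ω ^ 3 ∂μ := by
  calc ∫ ω, X ω ^ 2 * (c * X ω + Y ω) ∂μ
      = ∫ ω, (1 * X ω + 0 * Y ω) * (1 * X ω + 0 * Y ω) * (c * X ω + 1 * Y ω) ∂μ := by
        congr 1; ext ω; ring
    _ = _ := by rw [hXY.integral_mul_mul_of_integral_eq_zero hX hY hX0 hY0]; ring

lemma IndepFun.integral_mul_mul_add_sq (hXY : IndepFun X Y μ) (hX : MemLp X 3 μ)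
    (hY : MemLp Y 3 μ) (hX0 : μ[X] = 0) (hY0 : μ[Y] = 0) (c : ℝ) :
    ∫ ω, X ω * (c * X ω + Y ω) ^ 2 ∂μ = c ^ 2 * ∫ ω, X ω ^ 3 ∂μ := by
  calc ∫ ω, X ω * (c * X ω + Y ω) ^ 2 ∂μ
      = ∫ ω, (1 * X ω + 0 * Y ω) * (c * X ω + 1 * Y ω) * (c * X ω + 1 * Y ω) ∂μ := by
        congr 1; ext ω; ring
    _ = _ := by rw [hXY.integral_mul_mul_of_integral_eq_zero hX hY hX0 hY0]; ring

end ProbabilityTheory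

end

/-- Cumulants along the chain `x_i = e_i`, `x_j = b x_i + e_j`,
`x_k = c x_j + e_k`: `C_{2,1}(x_j,x_k) = c (b³ C₃(e_i) + C₃(e_j))` and
`C_{1,2}(x_j,x_k) = c² (b³ C₃(e_i) + C₃(e_j))`. -/
theorem chain_cumulants {Ω : Type*} [MeasureSpace Ω] (μ : Measure Ω)
    [IsProbabilityMeasure μ] (eI eJ eK : Ω → ℝ) (b c : ℝ)
    (hindep : iIndepFun ![eI, eJ, eK] μ)
    (hmi : μ[eI] = 0) (hmj : μ[eJ] = 0) (hmk : μ[eK] = 0)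
    (hint : ∀ f g h : Ω → ℝ, f ∈ [eI, eJ, eK] → g ∈ [eI, eJ, eK] →
      h ∈ [eI, eJ, eK] → Integrable (f * g * h) μ)
    (xI xJ xK : Ω → ℝ) (hxI : xI = eI)
    (hxJ : ∀ ω, xJ ω = b * xI ω + eJ ω)
    (hxK : ∀ ω, xK ω = c * xJ ω + eK ω) :
    μ[xJ ^ 2 * xK] = c * (b ^ 3 * μ[eI ^ 3] + μ[eJ ^ 3]) ∧
      μ[xJ * xK ^ 2] = c ^ 2 * (b ^ 3 * μ[eI ^ 3] + μ[eJ ^ 3]) := by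
  subst hxI
  have hL3 : ∀ e ∈ [xI, eJ, eK], MemLp e 3 μ := fun e he =>
    memLp_three_of_integrable_mul_mul_self (hint e e e he he he)
  have hI := hL3 xI (by simp)
  have hJ := hL3 eJ (by simp)
  have hK := hL3 eK (by simp)
  have hxJ' : xJ = fun ω => b * xI ω + eJ ω := funext hxJ
  have hXJ : MemLp xJ 3 μ := hxJ' ▸ (hI.const_mul b).add hJ
  have hmJ : μ[xJ] = 0 := by
    rw [hxJ', integral_add ((hI.integrable (by norm_num)).const_mul b)
      (hJ.integrable (by norm_num)), integral_const_mul, hmi, hmj, mul_zero, add_zero]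
  have hIJ : IndepFun xI eJ μ := hindep.indepFun (i := 0) (j := 1) (by decide)
  have hJK : IndepFun xJ eK μ := by
    have hmeas : ∀ i, AEMeasurable (![xI, eJ, eK] i) μ := by
      simp [Fin.forall_fin_succ, hI.1.aemeasurable, hJ.1.aemeasurable, hK.1.aemeasurable]
    rw [hxJ']
    exact (hindep.indepFun_prodMk₀ hmeas 0 1 2 (by decide) (by decide)).comp
      (by fun_prop : Measurable fun p : ℝ × ℝ => b * p.1 + p.2) measurable_id
  have hcube : ∫ ω, xJ ω ^ 3 ∂μ = b ^ 3 * ∫ ω, xI ω ^ 3 ∂μ + ∫ ω, eJ ω ^ 3 ∂μ := by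
    simp only [hxJ]
    exact hIJ.integral_mul_add_pow_three hI hJ hmi hmj b
  simp only [Pi.mul_apply, Pi.pow_apply, hxK]
  rw [hJK.integral_sq_mul_mul_add hXJ hK hmJ hmk, hJK.integral_mul_mul_add_sq hXJ hK hmJ hmk,
    hcube]
  exact ⟨rfl, rfl⟩
end

section
/- In the chain x_i → x_j → x_k (x_i = e_i, x_j = b·x_i + e_j, x_k = c·x_j + e_k, noises independent mean-zero with nonzero third moments, b ≠ 0), τ_{ij} = C_3(x_i)·C_{1,2}(x_i,x_j) − C_{2,1}(x_i,x_j)·C_{1,2}(x_j,x_i) = 0 and τ_{ik} = C_3(x_i)·C_{1,2}(x_i,x_k) − C_{2,1}(x_i,x_k)·C_{1,2}(x_k,x_i) = 0, so the source x_i satisfies τ_{ij} = 0 against all descendants. -/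
/-!
Write `m = E[X³]` for the source `X`. Every descendant is `Y = a X + N` with `N` mean-zero and
independent of `X`: for `x_k` take `a = c b` and `N = c e_j + e_k`. Independence kills the cross
moments `E[X² N] = E[X²] E[N]` and `E[X N²] = E[X] E[N²]`, which leaves `E[X² Y] = a m` and
`E[X Y²] = a² m`, so `τ = m · a² m - a m · a m = 0`.
-/

open MeasureTheory ProbabilityTheory Filter

theorem Odd.surjective_pow_real {n : ℕ} (hn : Odd n) :
    Function.Surjective fun x : ℝ => x ^ n := by
  refine (continuous_pow n).surjective (tendsto_pow_atTop hn.pos.ne') ?_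
  have h : (fun x : ℝ => x ^ n) = fun x => -(-x) ^ n := by ext x; rw [hn.neg_pow, neg_neg]
  rw [h]
  exact tendsto_neg_atTop_atBot.comp
    ((tendsto_pow_atTop hn.pos.ne').comp tendsto_neg_atBot_atTop)

theorem Odd.measurableEmbedding_pow {n : ℕ} (hn : Odd n) :
    MeasurableEmbedding fun x : ℝ => x ^ n :=
  (hn.strictMono_pow.orderIsoOfSurjective _ hn.surjective_pow_real).toHomeomorph
    |>.measurableEmbedding

section Moments

variable {Ω : Type*} [MeasurableSpace Ω] {μ : Measure Ω}

theorem AEMeasurable.of_pow_of_odd {f : Ω → ℝ} {n : ℕ} (hn : Odd n)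
    (h : AEMeasurable (fun ω => f ω ^ n) μ) : AEMeasurable f μ :=
  hn.measurableEmbedding_pow.aemeasurable_comp_iff.1 h

theorem Integrable.of_pow [IsFiniteMeasure μ] {f : Ω → ℝ} {n : ℕ} (hn : n ≠ 0)
    (hf : AEStronglyMeasurable f μ) (h : Integrable (fun ω => f ω ^ n) μ) :
    Integrable f μ := by
  refine ((integrable_const 1).add h.norm).mono' hf (ae_of_all _ fun ω => ?_)
  simp only [Real.norm_eq_abs, Pi.add_apply, abs_pow]
  rcases le_total |f ω| 1 with h1 | h1
  · linarith [pow_nonneg (abs_nonneg (f ω)) n]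
  · linarith [le_self_pow₀ h1 hn]

/-- The source statistic `τ_{XY} = C₃(X) C₁₂(X,Y) - C₂₁(X,Y) C₁₂(Y,X)`. -/
noncomputable def tau (μ : Measure Ω) (X Y : Ω → ℝ) : ℝ :=
  μ[X ^ 3] * μ[X * Y ^ 2] - μ[X ^ 2 * Y] * μ[Y * X ^ 2]

theorem tau_eq_zero_of_eq_mul_add_indepFun {X N Y : Ω → ℝ} (a : ℝ) (hXN : IndepFun X N μ)
    (hX : AEStronglyMeasurable X μ) (hN : AEStronglyMeasurable N μ)
    (hX0 : μ[X] = 0) (hN0 : μ[N] = 0) (hX3 : Integrable (X ^ 3) μ)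
    (hX2N : Integrable (X ^ 2 * N) μ) (hXN2 : Integrable (X * N ^ 2) μ)
    (hY : ∀ ω, Y ω = a * X ω + N ω) : tau μ X Y = 0 := by
  have hsq : Measurable fun x : ℝ => x ^ 2 := measurable_id.pow_const 2
  have hX2N0 : μ[X ^ 2 * N] = 0 := by
    have hind : IndepFun (X ^ 2) N μ := hXN.comp hsq measurable_id
    rw [hind.integral_mul_eq_mul_integral (hX.pow 2) hN, hN0, mul_zero]
  have hXN20 : μ[X * N ^ 2] = 0 := by
    have hind : IndepFun X (N ^ 2) μ := hXN.comp measurable_id hsq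
    rw [hind.integral_mul_eq_mul_integral hX (hN.pow 2), hX0, zero_mul]
  have hX2Y : μ[X ^ 2 * Y] = a * μ[X ^ 3] := calc
    μ[X ^ 2 * Y] = ∫ ω, a * (X ^ 3) ω + (X ^ 2 * N) ω ∂μ := by
      congr 1; ext ω; simp only [Pi.mul_apply, Pi.pow_apply, hY]; ring
    _ = a * μ[X ^ 3] := by
      rw [integral_add (hX3.const_mul a) hX2N, integral_const_mul, hX2N0, add_zero]
  have hYX2 : μ[Y * X ^ 2] = a * μ[X ^ 3] := by rw [mul_comm, hX2Y]
  have hXY2 : μ[X * Y ^ 2] = a ^ 2 * μ[X ^ 3] := calc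
    μ[X * Y ^ 2]
        = ∫ ω, (a ^ 2 * (X ^ 3) ω + 2 * a * (X ^ 2 * N) ω) + (X * N ^ 2) ω ∂μ := by
      congr 1; ext ω; simp only [Pi.mul_apply, Pi.pow_apply, hY]; ring
    _ = a ^ 2 * μ[X ^ 3] := by
      rw [integral_add ?_ hXN2, integral_add (hX3.const_mul _) (hX2N.const_mul _),
        integral_const_mul, integral_const_mul, hX2N0, hXN20]
      · ring
      · exact (hX3.const_mul _).add (hX2N.const_mul _)
  rw [tau, hX2Y, hYX2, hXY2]
  ring

theorem tau_eq_zero_of_eq_mul_add_mul_add_mul [IsFiniteMeasure μ] {X U V Y : Ω → ℝ}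
    (a c d : ℝ) (hind : iIndepFun ![X, U, V] μ) (hX0 : μ[X] = 0) (hU0 : μ[U] = 0)
    (hV0 : μ[V] = 0) (hint : ∀ f g h : Ω → ℝ, f ∈ [X, U, V] → g ∈ [X, U, V] →
      h ∈ [X, U, V] → Integrable (f * g * h) μ)
    (hY : ∀ ω, Y ω = a * X ω + c * U ω + d * V ω) : tau μ X Y = 0 := by
  have memX : X ∈ [X, U, V] := by simp
  have memU : U ∈ [X, U, V] := by simp
  have memV : V ∈ [X, U, V] := by simp
  have hcube : ∀ e ∈ [X, U, V], Integrable (e ^ 3) μ := fun e he =>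
    (hint e e e he he he).congr
      (ae_of_all _ fun ω => by simp only [Pi.mul_apply, Pi.pow_apply]; ring)
  -- Measurability is not assumed: `e` is recovered from `e ^ 3` by the measurable cube root.
  have hmeas : ∀ e ∈ [X, U, V], AEStronglyMeasurable e μ := fun e he =>
    (AEMeasurable.of_pow_of_odd (by decide) (hcube e he).aemeasurable).aestronglyMeasurable
  have hintegrable : ∀ e ∈ [X, U, V], Integrable e μ := fun e he =>
    Integrable.of_pow three_ne_zero (hmeas e he) (hcube e he)
  have hXN : IndepFun X (fun ω => c * U ω + d * V ω) μ := by
    have h := hind.indepFun_prodMk₀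
      (fun i => by fin_cases i <;> exact (hmeas _ (by simp)).aemeasurable) 1 2 0
      (by decide) (by decide)
    exact (h.comp ((measurable_fst.const_mul c).add (measurable_snd.const_mul d))
      measurable_id).symm
  refine tau_eq_zero_of_eq_mul_add_indepFun a hXN (hmeas X memX)
    (((hmeas U memU).const_mul c).add ((hmeas V memV).const_mul d)) hX0 ?_ (hcube X memX) ?_ ?_
    fun ω => by rw [hY]; ring
  · show ∫ ω, c * U ω + d * V ω ∂μ = 0
    rw [integral_add ((hintegrable U memU).const_mul c) ((hintegrable V memV).const_mul d),
      integral_const_mul, integral_const_mul, hU0, hV0]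
    ring
  · exact (((hint X X U memX memX memU).const_mul c).add
      ((hint X X V memX memX memV).const_mul d)).congr
      (ae_of_all _ fun ω => by simp only [Pi.mul_apply, Pi.pow_apply, Pi.add_apply]; ring)
  · exact ((((hint X U U memX memU memU).const_mul (c ^ 2)).add
      ((hint X U V memX memU memV).const_mul (2 * c * d))).add
      ((hint X V V memX memV memV).const_mul (d ^ 2))).congr
      (ae_of_all _ fun ω => by simp only [Pi.mul_apply, Pi.pow_apply, Pi.add_apply]; ring)

end Moments

theorem chain_source_tau_zero_general {Ω : Type*} [MeasureSpace Ω] (μ : Measure Ω)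
    [IsProbabilityMeasure μ] (eI eJ eK : Ω → ℝ) (b c : ℝ)
    (hindep : iIndepFun ![eI, eJ, eK] μ)
    (hmi : μ[eI] = 0) (hmj : μ[eJ] = 0) (hmk : μ[eK] = 0)
    (hint : ∀ f g h : Ω → ℝ, f ∈ [eI, eJ, eK] → g ∈ [eI, eJ, eK] →
      h ∈ [eI, eJ, eK] → Integrable (f * g * h) μ)
    (xI xJ xK : Ω → ℝ) (hxI : xI = eI)
    (hxJ : ∀ ω, xJ ω = b * xI ω + eJ ω)
    (hxK : ∀ ω, xK ω = c * xJ ω + eK ω) :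
    μ[xI ^ 3] * μ[xI * xJ ^ 2] - μ[xI ^ 2 * xJ] * μ[xJ * xI ^ 2] = 0 ∧
      μ[xI ^ 3] * μ[xI * xK ^ 2] - μ[xI ^ 2 * xK] * μ[xK * xI ^ 2] = 0 := by
  subst xI
  exact ⟨tau_eq_zero_of_eq_mul_add_mul_add_mul b 1 0 hindep hmi hmj hmk hint
      fun ω => by rw [hxJ]; ring,
    tau_eq_zero_of_eq_mul_add_mul_add_mul (c * b) c 1 hindep hmi hmj hmk hint
      fun ω => by rw [hxK, hxJ]; ring⟩

/-- In the chain `x_i → x_j → x_k`, the source `x_i` satisfies the source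
criterion against all descendants: `τ_{ij} = 0` and `τ_{ik} = 0`. -/
theorem chain_source_tau_zero {Ω : Type*} [MeasureSpace Ω] (μ : Measure Ω)
    [IsProbabilityMeasure μ] (eI eJ eK : Ω → ℝ) (b c : ℝ) (hb : b ≠ 0)
    (hindep : iIndepFun ![eI, eJ, eK] μ)
    (hmi : μ[eI] = 0) (hmj : μ[eJ] = 0) (hmk : μ[eK] = 0)
    (hc3i : μ[eI ^ 3] ≠ 0) (hc3j : μ[eJ ^ 3] ≠ 0) (hc3k : μ[eK ^ 3] ≠ 0)
    (hint : ∀ f g h : Ω → ℝ, f ∈ [eI, eJ, eK] → g ∈ [eI, eJ, eK] →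
      h ∈ [eI, eJ, eK] → Integrable (f * g * h) μ)
    (xI xJ xK : Ω → ℝ) (hxI : xI = eI)
    (hxJ : ∀ ω, xJ ω = b * xI ω + eJ ω)
    (hxK : ∀ ω, xK ω = c * xJ ω + eK ω) :
    μ[xI ^ 3] * μ[xI * xJ ^ 2] - μ[xI ^ 2 * xJ] * μ[xJ * xI ^ 2] = 0 ∧
      μ[xI ^ 3] * μ[xI * xK ^ 2] - μ[xI ^ 2 * xK] * μ[xK * xI ^ 2] = 0 :=
  chain_source_tau_zero_general μ eI eJ eK b c hindep hmi hmj hmk hint xI xJ xK hxI hxJ hxK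
end
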